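/- The C-element trace structure satisfies rule R₃′ (the synchronization class condition): for any trace s and distinct symbols x ≠ y in the alphabet, if sx and sy are both traces then sxy is a trace. -/

import Mathlib

/-- A trace structure: input alphabet, output alphabet, and a set of traces. -/
structure TraceStructure (α : Type*) where
  i : Set α
  o : Set α
  t : Set (List α)

namespace TraceStructure

variable {α : Type*}

/-- Total alphabet. -/
def alph (R : TraceStructure α) : Set α := R.i ∪ R.o

/-- Projection of a trace onto an alphabet: delete all symbols not in `A`. -/
noncomputable def projT (A : Set α) (w : List α) : List α :=
  w.filter (fun x => @decide (x ∈ A) (Classical.propDecidable _))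

/-- Reflection: swap input and output alphabets. -/
def reflect (R : TraceStructure α) : TraceStructure α := ⟨R.o, R.i, R.t⟩

/-- Weave of two trace structures. -/
noncomputable def weave (R S : TraceStructure α) : TraceStructure α :=
  ⟨R.i ∪ S.i, R.o ∪ S.o,
   {w | (∀ x ∈ w, x ∈ R.alph ∪ S.alph) ∧ projT R.alph w ∈ R.t ∧ projT S.alph w ∈ S.t}⟩

/-- Union of two trace structures. -/
def tsUnion (R S : TraceStructure α) : TraceStructure α :=
  ⟨R.i ∪ S.i, R.o ∪ S.o, R.t ∪ S.t⟩

/-- Projection of a trace structure onto an alphabet `A`. -/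
noncomputable def tsProj (R : TraceStructure α) (A : Set α) : TraceStructure α :=
  ⟨R.i ∩ A, R.o ∩ A, {w | ∃ u ∈ R.t, w = projT A u}⟩

/-- Prefix closure of a set of traces. -/
def prefSet (T : Set (List α)) : Set (List α) := {s | ∃ u, s ++ u ∈ T}

/-- Prefix closure of a trace structure. -/
def pref (R : TraceStructure α) : TraceStructure α := ⟨R.i, R.o, prefSet R.t⟩

/-- Kleene star (arbitrary repetition) of a set of traces. -/
def star (L : Set (List α)) : Set (List α) :=
  {w | ∃ ls : List (List α), (∀ u ∈ ls, u ∈ L) ∧ w = ls.flatten}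

/-- A set of traces is prefix-closed. -/
def PrefixClosed (T : Set (List α)) : Prop := ∀ s u : List α, s ++ u ∈ T → s ∈ T

/-- Rule R₀: no two consecutive transitions on the same wire. -/
def SatR0 (R : TraceStructure α) : Prop :=
  ∀ s ∈ R.t, ∀ x ∈ R.alph, s ++ [x, x] ∉ R.t

/-- Rule R₁: symbols of the same type commute. -/
def SatR1 (R : TraceStructure α) : Prop :=
  ∀ (s t : List α) (x y : α),
    ((x ∈ R.i ∧ y ∈ R.i) ∨ (x ∈ R.o ∧ y ∈ R.o)) →
    (s ++ [x, y] ++ t ∈ R.t ↔ s ++ [y, x] ++ t ∈ R.t)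

/-- Rule R₂′. -/
def SatR2' (R : TraceStructure α) : Prop :=
  ∀ (s t : List α) (x y z : α),
    ((x ∈ R.i ∧ z ∈ R.i ∧ y ∈ R.o) ∨ (x ∈ R.o ∧ z ∈ R.o ∧ y ∈ R.i)) →
    s ++ [x, y] ++ t ++ [z] ∈ R.t → s ++ [y, x] ++ t ∈ R.t →
    s ++ [y, x] ++ t ++ [z] ∈ R.t

/-- Rule R₃′ (synchronization class). -/
def SatR3' (R : TraceStructure α) : Prop :=
  ∀ (s : List α) (x y : α), x ≠ y → x ∈ R.alph → y ∈ R.alph →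
    s ++ [x] ∈ R.t → s ++ [y] ∈ R.t → s ++ [x, y] ∈ R.t

/-- Rule R₃′′ (data communication class). -/
def SatR3'' (R : TraceStructure α) : Prop :=
  ∀ (s : List α) (x y : α), x ≠ y → x ∈ R.alph → y ∈ R.alph →
    ¬(x ∈ R.i ∧ y ∈ R.i) →
    s ++ [x] ∈ R.t → s ++ [y] ∈ R.t → s ++ [x, y] ∈ R.t

/-- Rule R₃′′′ (arbitration class). -/
def SatR3''' (R : TraceStructure α) : Prop :=
  ∀ (s : List α) (x y : α),
    ((x ∈ R.i ∧ y ∈ R.o) ∨ (x ∈ R.o ∧ y ∈ R.i)) →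
    s ++ [x] ∈ R.t → s ++ [y] ∈ R.t → s ++ [x, y] ∈ R.t

/-- The WIRE component `pref *[a?; b!]`. -/
def wire (a b : α) : TraceStructure α :=
  ⟨{a}, {b}, prefSet (star {[a, b]})⟩

/-- The C-element `pref *[(a? || b?); c!]`. -/
def cElement (a b c : α) : TraceStructure α :=
  ⟨{a, b}, {c}, prefSet (star ({[a, b, c], [b, a, c]} : Set (List α)))⟩

/-- Interleaving (shuffle) of two traces. -/
inductive Interleave : List α → List α → List α → Prop
  | nil : Interleave [] [] []
  | left {x : α} {u v t : List α} : Interleave u v t → Interleave (x :: u) v (x :: t)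
  | right {x : α} {u v t : List α} : Interleave u v t → Interleave u (x :: v) (x :: t)

end TraceStructure

open TraceStructure

/-!
Every word of `{abc, bac}*` has length divisible by 3, so a trace of the C-element splits
uniquely into completed cycles followed by a proper prefix of `abc` or `bac`, the splitting point
being fixed by the length alone. Hence two one-symbol extensions `s x` and `s y` of a trace
continue the same unfinished cycle, and R₃′ reduces to the same property for the prefixes of
`abc` and `bac`, which is a finite check.
-/

theorem List.append_inj_of_dvd_length {α : Type*} {n : ℕ} {j₁ j₂ p₁ p₂ : List α}
    (h : j₁ ++ p₁ = j₂ ++ p₂) (hj₁ : n ∣ j₁.length) (hj₂ : n ∣ j₂.length)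
    (hp₁ : p₁.length < n) (hp₂ : p₂.length < n) : j₁ = j₂ ∧ p₁ = p₂ := by
  refine List.append_inj h ?_
  obtain ⟨k₁, hk₁⟩ := hj₁
  obtain ⟨k₂, hk₂⟩ := hj₂
  have hlen := congrArg List.length h
  simp only [List.length_append] at hlen
  rcases lt_trichotomy k₁ k₂ with hk | rfl | hk
  · nlinarith
  · rw [hk₁, hk₂]
  · nlinarith

namespace TraceStructure

variable {α : Type*}

def IsSyncClosed (T : Set (List α)) : Prop :=
  ∀ (s : List α) (x y : α), x ≠ y → s ++ [x] ∈ T → s ++ [y] ∈ T → s ++ [x, y] ∈ T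

section Star

variable {L : Set (List α)}

theorem mem_star_of_mem {w : List α} (hw : w ∈ L) : w ∈ star L :=
  ⟨[w], by simpa using hw, by simp⟩

theorem append_mem_star {j₁ j₂ : List α} (h₁ : j₁ ∈ star L) (h₂ : j₂ ∈ star L) :
    j₁ ++ j₂ ∈ star L := by
  obtain ⟨ls₁, hls₁, rfl⟩ := h₁
  obtain ⟨ls₂, hls₂, rfl⟩ := h₂
  exact ⟨ls₁ ++ ls₂, by simpa [or_imp, forall_and] using ⟨hls₁, hls₂⟩, by simp⟩

theorem dvd_length_of_mem_star {n : ℕ} (hL : ∀ w ∈ L, w.length = n) {j : List α}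
    (hj : j ∈ star L) : n ∣ j.length := by
  obtain ⟨ls, hls, rfl⟩ := hj
  rw [List.length_flatten]
  exact List.dvd_sum fun k hk => by
    obtain ⟨w, hw, rfl⟩ := List.mem_map.1 hk
    exact (hL w (hls w hw)).symm ▸ dvd_rfl

theorem append_singleton_mem_prefSet_star_iff {s : List α} {x : α} :
    s ++ [x] ∈ prefSet (star L) ↔ ∃ j ∈ star L, ∃ p, s = j ++ p ∧ p ++ [x] ∈ prefSet L := by
  constructor
  · rintro ⟨u, ls, hls, hflat⟩
    induction ls generalizing s with
    | nil => simp at hflat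
    | cons w ls ih =>
      have hw : w ∈ star L := mem_star_of_mem (hls w List.mem_cons_self)
      have hls' : ∀ v ∈ ls, v ∈ L := fun v hv => hls v (List.mem_cons_of_mem w hv)
      rw [List.flatten_cons, List.append_assoc] at hflat
      rcases List.append_eq_append_iff.1 hflat with ⟨_ | ⟨x', r⟩, rfl, hrest⟩ | ⟨r, rfl, hrest⟩
      · obtain ⟨j, -, p, hjp, hp⟩ := ih (s := []) hls' (by simpa using hrest)
        obtain ⟨rfl, rfl⟩ := List.append_eq_nil_iff.1 hjp.symm
        exact ⟨s, by simpa using hw, [], by simp, hp⟩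
      · obtain ⟨rfl, -⟩ := List.cons_eq_cons.1 hrest
        exact ⟨[], ⟨[], by simp, rfl⟩, s, by simp, r, by simpa using hls _ List.mem_cons_self⟩
      · obtain ⟨j, hj, p, rfl, hp⟩ := ih hls' (by simpa using hrest.symm)
        exact ⟨w ++ j, append_mem_star hw hj, p, by simp, hp⟩
  · rintro ⟨j, hj, p, rfl, u, hu⟩
    exact ⟨u, by simpa using append_mem_star hj (mem_star_of_mem hu)⟩

theorem IsSyncClosed.prefSet_star {n : ℕ} (hL : ∀ w ∈ L, w.length = n)
    (h : IsSyncClosed (prefSet L)) : IsSyncClosed (prefSet (star L)) := by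
  have length_lt {p : List α} {x : α} (hp : p ++ [x] ∈ prefSet L) : p.length < n := by
    obtain ⟨u, hu⟩ := hp
    have := hL _ hu
    simp only [List.length_append, List.length_singleton] at this
    omega
  intro s x y hxy hx hy
  obtain ⟨j₁, hj₁, p₁, rfl, hp₁⟩ := append_singleton_mem_prefSet_star_iff.1 hx
  obtain ⟨j₂, hj₂, p₂, hs, hp₂⟩ := append_singleton_mem_prefSet_star_iff.1 hy
  obtain ⟨rfl, rfl⟩ := List.append_inj_of_dvd_length hs (dvd_length_of_mem_star hL hj₁)
    (dvd_length_of_mem_star hL hj₂) (length_lt hp₁) (length_lt hp₂)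
  simpa using append_singleton_mem_prefSet_star_iff.2
    ⟨j₁, hj₁, p₁ ++ [x], rfl, by simpa using h p₁ x y hxy hp₁ hp₂⟩

end Star

theorem isSyncClosed_prefSet_abc_bac (a b c : α) :
    IsSyncClosed (prefSet ({[a, b, c], [b, a, c]} : Set (List α))) := by
  rintro p x y hxy ⟨u, hu⟩ ⟨v, hv⟩
  rcases p with _ | ⟨p₁, _ | ⟨p₂, _ | ⟨p₃, p⟩⟩⟩ <;> simp only [Set.mem_insert_iff,
    Set.mem_singleton_iff, List.cons_append, List.nil_append, List.cons.injEq] at hu hv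
  · exact ⟨[c], by aesop⟩
  all_goals aesop

end TraceStructure

theorem cElement_satR3'_general {α : Type*} (a b c : α) :
    SatR3' (cElement a b c) := fun s x y hxy _ _ =>
  (isSyncClosed_prefSet_abc_bac a b c).prefSet_star (n := 3) (by simp) s x y hxy

theorem cElement_satR3' {α : Type*} (a b c : α)
    (hab : a ≠ b) (hac : a ≠ c) (hbc : b ≠ c) :
    SatR3' (cElement a b c) :=
  cElement_satR3'_general a b c
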